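/- With q(λ) = Σ_{i=m}^{n} (−1)^{n−i} (s_{n−i}/s_{n−m}) λ^{i}, for every λ ∈ ℂ such that τ := g_m·|λ| < 1 one has |q(λ)| ≥ |λ|^m · (1 − 2τ)/(1 − τ). -/

import Mathlib

open Finset

/-- The `k`-th elementary symmetric function of the values `σ i`, `i : Fin n`
(with the convention `esym σ 0 = 1`). -/
noncomputable def esym {n : ℕ} (σ : Fin n → ℝ) (k : ℕ) : ℝ :=
  ∑ t ∈ Finset.univ.powersetCard k, ∏ i ∈ t, σ i

/-- `g_m = max_{m+1 ≤ i ≤ n} (s_{n-i}/s_{n-m})^{1/(i-m)}`, with the convention `g_n = 1`. -/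
noncomputable def gQ (n : ℕ) (σ : Fin n → ℝ) (m : ℕ) : ℝ :=
  if m = n then 1 else
    sSup ((fun i : ℕ => (esym σ (n - i) / esym σ (n - m)) ^ ((1 : ℝ) / ((i : ℝ) - (m : ℝ)))) ''
      (Set.Icc (m + 1) n))

/-- The polynomial `q(λ) = Σ_{i=m}^{n} (−1)^{n−i} (s_{n−i}/s_{n−m}) λ^{i}`. -/
noncomputable def qPoly (n : ℕ) (σ : Fin n → ℝ) (m : ℕ) (lam : ℂ) : ℂ :=
  ∑ i ∈ Finset.Icc m n,
    (-1 : ℂ) ^ (n - i) * ((esym σ (n - i) / esym σ (n - m) : ℝ) : ℂ) * lam ^ i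

/-!
The coefficient of `λ^m` in `q` is `±1`: indeed `s_{n-m} > 0`, because `r = rank M = rank MᴴM`
is the number of nonzero eigenvalues of `MᴴM`, so at least `n - m ≤ r` singular values are
nonzero. By definition of `g_m` the other coefficients satisfy `s_{n-i}/s_{n-m} ≤ g_m^{i-m}`, so
the remaining terms of `q(λ)` have total modulus at most `|λ|^m (τ + τ² + ⋯) = |λ|^m τ/(1 - τ)`,
and `|q(λ)| ≥ |λ|^m (1 - τ/(1 - τ))` by the triangle inequality.
-/

lemma geom_sum_Ioc_pow_sub_le {x : ℝ} (hx₀ : 0 ≤ x) (hx₁ : x < 1) (m n : ℕ) :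
    ∑ i ∈ Ioc m n, x ^ (i - m) ≤ x / (1 - x) := by
  have hreindex : ∑ i ∈ Ioc m n, x ^ (i - m) = ∑ k ∈ Ico 1 (n - m + 1), x ^ k :=
    sum_nbij' (· - m) (· + m) (fun i hi => by simp only [mem_Ioc, mem_Ico] at *; omega)
      (fun k hk => by simp only [mem_Ioc, mem_Ico] at *; omega)
      (fun i hi => by simp only [mem_Ioc] at hi; omega)
      (fun k hk => by simp only [mem_Ico] at hk; omega) (fun _ _ => rfl)
  simpa [hreindex] using geom_sum_Ico_le_of_lt_one (m := 1) (n := n - m + 1) hx₀ hx₁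

lemma pow_mul_le_norm_sum_Icc_of_norm_coeff_le {𝕜 : Type*} [NormedDivisionRing 𝕜] {m n : ℕ}
    (hmn : m ≤ n) {c : ℕ → 𝕜} (hcm : ‖c m‖ = 1) {g : ℝ} (hg : 0 ≤ g)
    (hc : ∀ i ∈ Ioc m n, ‖c i‖ ≤ g ^ (i - m)) {z : 𝕜} (hτ : g * ‖z‖ < 1) :
    ‖z‖ ^ m * (1 - 2 * (g * ‖z‖)) / (1 - g * ‖z‖) ≤ ‖∑ i ∈ Icc m n, c i * z ^ i‖ := by
  set τ := g * ‖z‖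
  have hτ₀ : 0 ≤ τ := by positivity
  have hterm : ∀ i ∈ Ioc m n, ‖c i * z ^ i‖ ≤ ‖z‖ ^ m * τ ^ (i - m) := fun i hi => by
    obtain ⟨k, rfl⟩ := Nat.exists_eq_add_of_le (mem_Ioc.1 hi).1.le
    calc ‖c (m + k) * z ^ (m + k)‖ ≤ g ^ (m + k - m) * ‖z‖ ^ (m + k) := by
          rw [norm_mul, norm_pow]; gcongr; exact hc _ hi
      _ = ‖z‖ ^ m * τ ^ (m + k - m) := by
          rw [Nat.add_sub_cancel_left, mul_pow, pow_add]; ring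
  have htail : ‖∑ i ∈ Ioc m n, c i * z ^ i‖ ≤ ‖z‖ ^ m * (τ / (1 - τ)) :=
    calc ‖∑ i ∈ Ioc m n, c i * z ^ i‖ ≤ ∑ i ∈ Ioc m n, ‖z‖ ^ m * τ ^ (i - m) :=
          (norm_sum_le _ _).trans (sum_le_sum hterm)
      _ ≤ ‖z‖ ^ m * (τ / (1 - τ)) := by
          rw [← mul_sum]; gcongr; exact geom_sum_Ioc_pow_sub_le hτ₀ hτ m n
  have hlead : ‖c m * z ^ m‖ = ‖z‖ ^ m := by rw [norm_mul, hcm, one_mul, norm_pow]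
  rw [Icc_eq_cons_Ioc hmn, sum_cons]
  have htri := norm_sub_norm_le (c m * z ^ m) (-∑ i ∈ Ioc m n, c i * z ^ i)
  rw [sub_neg_eq_add, norm_neg, hlead] at htri
  have hτ₁ : 0 < 1 - τ := by linarith
  calc ‖z‖ ^ m * (1 - 2 * τ) / (1 - τ) = ‖z‖ ^ m - ‖z‖ ^ m * (τ / (1 - τ)) := by
        field_simp; ring
    _ ≤ _ := by linarith

lemma esym_nonneg {n : ℕ} {σ : Fin n → ℝ} (hσ : ∀ i, 0 ≤ σ i) (k : ℕ) : 0 ≤ esym σ k :=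
  sum_nonneg fun _ _ => prod_nonneg fun i _ => hσ i

lemma esym_pos {n k : ℕ} {σ : Fin n → ℝ} (hσ : ∀ i, 0 ≤ σ i)
    (hk : k ≤ #{i | σ i ≠ 0}) : 0 < esym σ k := by
  obtain ⟨t, hts, htk⟩ := exists_subset_card_eq hk
  have hprod : 0 < ∏ i ∈ t, σ i :=
    prod_pos fun i hi => (hσ i).lt_of_ne (mem_filter.1 (hts hi)).2.symm
  exact hprod.trans_le <| single_le_sum (f := fun u => ∏ i ∈ u, σ i)
    (fun u _ => prod_nonneg fun i _ => hσ i) (mem_powersetCard.2 ⟨subset_univ t, htk⟩)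

lemma card_singularValues_ne_zero {𝕜 : Type*} [RCLike 𝕜] {ι κ : Type*} [Fintype ι] [Fintype κ]
    [DecidableEq κ] (M : Matrix ι κ 𝕜) {σ : κ → ℝ} (e : κ ≃ κ)
    (hσ : ∀ i, σ i = √((Matrix.isHermitian_conjTranspose_mul_self M).eigenvalues (e i))) :
    #{i | σ i ≠ 0} = M.rank := by
  open scoped ComplexOrder in
  rw [← Matrix.rank_conjTranspose_mul_self M,
    (Matrix.isHermitian_conjTranspose_mul_self M).rank_eq_card_non_zero_eigs,
    ← Fintype.card_subtype]
  refine Fintype.card_congr (e.subtypeEquiv fun i => ?_)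
  rw [hσ, ne_eq, ne_eq, Real.sqrt_eq_zero (Matrix.eigenvalues_conjTranspose_mul_self_nonneg M _)]

lemma le_gQ {n m i : ℕ} (σ : Fin n → ℝ) (hi : i ∈ Ioc m n) :
    (esym σ (n - i) / esym σ (n - m)) ^ ((1 : ℝ) / ((i : ℝ) - (m : ℝ))) ≤ gQ n σ m := by
  have hmn : m ≠ n := by have := mem_Ioc.1 hi; omega
  rw [gQ, if_neg hmn]
  exact le_csSup ((Set.finite_Icc (m + 1) n).image _).bddAbove ⟨i, mem_Ioc.1 hi, rfl⟩

lemma gQ_nonneg {n : ℕ} {σ : Fin n → ℝ} (hσ : ∀ i, 0 ≤ σ i) (m : ℕ) : 0 ≤ gQ n σ m := by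
  unfold gQ
  split_ifs
  · exact zero_le_one
  · refine Real.sSup_nonneg ?_
    rintro _ ⟨i, -, rfl⟩
    exact Real.rpow_nonneg (div_nonneg (esym_nonneg hσ _) (esym_nonneg hσ _)) _

lemma esym_div_esym_le_gQ_pow {n m i : ℕ} {σ : Fin n → ℝ} (hσ : ∀ i, 0 ≤ σ i)
    (hi : i ∈ Ioc m n) : esym σ (n - i) / esym σ (n - m) ≤ gQ n σ m ^ (i - m) := by
  have hmi : m < i := (mem_Ioc.1 hi).1
  have hratio : 0 ≤ esym σ (n - i) / esym σ (n - m) :=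
    div_nonneg (esym_nonneg hσ _) (esym_nonneg hσ _)
  have hroot := le_gQ σ hi
  rw [one_div, ← Nat.cast_sub hmi.le] at hroot
  calc esym σ (n - i) / esym σ (n - m)
      = ((esym σ (n - i) / esym σ (n - m)) ^ ((i - m : ℕ) : ℝ)⁻¹) ^ (i - m) :=
        (Real.rpow_inv_natCast_pow hratio (Nat.sub_ne_zero_of_lt hmi)).symm
    _ ≤ gQ n σ m ^ (i - m) := by gcongr

theorem stmt1_general {s n : ℕ}
    (M : Matrix (Fin s) (Fin n) ℂ) (σ : Fin n → ℝ)
    (hσnonneg : ∀ i, 0 ≤ σ i)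
    -- `σ` is the family of singular values of `M`:
    (e : Fin n ≃ Fin n)
    (hσsv : ∀ i, σ i =
      Real.sqrt ((Matrix.isHermitian_conjTranspose_mul_self M).eigenvalues (e i)))
    (r : ℕ) (hrank : M.rank = r)
    (m : ℕ) (hm₁ : n - r ≤ m) (hm₂ : m ≤ n)
    (lam : ℂ) (hτ : gQ n σ m * ‖lam‖ < 1) :
    ‖lam‖ ^ m * (1 - 2 * (gQ n σ m * ‖lam‖)) /
        (1 - gQ n σ m * ‖lam‖) ≤ ‖qPoly n σ m lam‖ := by
  have hpos : 0 < esym σ (n - m) :=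
    esym_pos hσnonneg (by rw [card_singularValues_ne_zero M e hσsv, hrank]; omega)
  have hcoeff : ∀ i, ‖(-1 : ℂ) ^ (n - i) * ((esym σ (n - i) / esym σ (n - m) : ℝ) : ℂ)‖ =
      esym σ (n - i) / esym σ (n - m) := fun i => by
    rw [norm_mul, norm_pow, norm_neg, norm_one, one_pow, one_mul, Complex.norm_of_nonneg
      (div_nonneg (esym_nonneg hσnonneg _) hpos.le)]
  exact pow_mul_le_norm_sum_Icc_of_norm_coeff_le hm₂ (by rw [hcoeff, div_self hpos.ne'])
    (gQ_nonneg hσnonneg m) (fun i hi => (hcoeff i).trans_le (esym_div_esym_le_gQ_pow hσnonneg hi))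
    hτ

/-- With `q(λ) = Σ_{i=m}^{n} (−1)^{n−i} (s_{n−i}/s_{n−m}) λ^{i}`, for every
`λ ∈ ℂ` such that `τ := g_m·|λ| < 1` one has `|q(λ)| ≥ |λ|^m · (1 − 2τ)/(1 − τ)`. -/
theorem stmt1 {s n : ℕ} (hn : 1 ≤ n) (hsn : n ≤ s)
    (M : Matrix (Fin s) (Fin n) ℂ) (σ : Fin n → ℝ)
    (hσnonneg : ∀ i, 0 ≤ σ i)
    (hσanti : ∀ i j : Fin n, i ≤ j → σ j ≤ σ i)
    -- `σ` is the family of singular values of `M`: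
    (e : Fin n ≃ Fin n)
    (hσsv : ∀ i, σ i =
      Real.sqrt ((Matrix.isHermitian_conjTranspose_mul_self M).eigenvalues (e i)))
    (r : ℕ) (hrank : M.rank = r)
    (m : ℕ) (hm₁ : n - r ≤ m) (hm₂ : m ≤ n)
    (lam : ℂ) (hτ : gQ n σ m * ‖lam‖ < 1) :
    ‖lam‖ ^ m * (1 - 2 * (gQ n σ m * ‖lam‖)) /
        (1 - gQ n σ m * ‖lam‖) ≤ ‖qPoly n σ m lam‖ :=
  stmt1_general M σ hσnonneg e hσsv r hrank m hm₁ hm₂ lam hτ
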